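/- Define a(λ) by a(∅) = 1 and a(λ₁,…,λ_r) = a(λ₁,…,λ_{r−1}) + λ_r·a(λ₁−1,…,λ_r−1). Then for any r ≥ 0, k ≥ 1, m ≥ q ≥ 1 and a tail α₁ ≥ … ≥ α_r with q > α₁ ≥ 1, one has (m−q+1)·a(m, q^{k−1}, q, α₁,…,α_r) ≤ k·a(m+1, q^{k−1}, q−1, α₁,…,α_r). -/

import Mathlib

def colErase (l : List ℕ) : List ℕ := (l.map (· - 1)).filter (· ≠ 0)

def IsPartition (l : List ℕ) : Prop := l.Pairwise (· ≥ ·) ∧ ∀ x ∈ l, 0 < x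

/-!
Expand both sides by the recursion at their last part. If `α` is nonempty, both partitions end in
the same part `t`, and the inequality splits into two smaller instances of itself: one for `α`
without `t`, one for the partitions with their first column removed. If `α` is empty, the last
parts are `q` and `q - 1`, and what is left is the companion inequality `CompanionIneq`, which in
turn reduces to smaller instances of both; the two are proved together by induction on the size of
the partitions. The base cases are partitions with at most two rows or with `q = 1`, where
`a (n) = 1 + n a (n - 1)` and `a (s, t) ≤ (t + 1) a (s)` suffice.
-/

namespace DerangementEigenvalue

/-- The one-row partition `(n)`; empty for `n = 0`. -/
def oneRow (n : ℕ) : List ℕ := if n = 0 then [] else [n]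

/-- The partition `(m, q^k, β)`. -/
def block (m q k : ℕ) (β : List ℕ) : List ℕ := m :: (List.replicate k q ++ β)

@[simp] lemma oneRow_zero : oneRow 0 = [] := rfl

@[simp] lemma oneRow_succ (n : ℕ) : oneRow (n + 1) = [n + 1] := rfl

lemma oneRow_of_ne_zero {n : ℕ} (hn : n ≠ 0) : oneRow n = [n] := if_neg hn

lemma mem_oneRow {x n : ℕ} (hx : x ∈ oneRow n) : x = n ∧ 0 < n := by
  unfold oneRow at hx
  split_ifs at hx with hn
  · simp at hx
  · exact ⟨List.eq_of_mem_singleton hx, Nat.pos_of_ne_zero hn⟩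

@[simp] lemma sum_oneRow (n : ℕ) : (oneRow n).sum = n := by
  unfold oneRow; split_ifs with hn <;> simp [hn]

lemma block_append (m q k : ℕ) (β l : List ℕ) :
    block m q k β ++ l = block m q k (β ++ l) := by
  simp [block]

lemma block_succ (m q k : ℕ) (β : List ℕ) : block m q (k + 1) β = block m q k (q :: β) := by
  simp [block, List.replicate_succ']

@[simp] lemma block_zero (m q : ℕ) (β : List ℕ) : block m q 0 β = m :: β := rfl

lemma colErase_cons (x : ℕ) (l : List ℕ) :
    colErase (x :: l) = oneRow (x - 1) ++ colErase l := by
  by_cases hx : x - 1 = 0 <;> simp [colErase, oneRow, hx]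

@[simp] lemma colErase_nil : colErase [] = [] := rfl

lemma colErase_append (l₁ l₂ : List ℕ) :
    colErase (l₁ ++ l₂) = colErase l₁ ++ colErase l₂ := by
  simp [colErase]

lemma colErase_oneRow (n : ℕ) : colErase (oneRow n) = oneRow (n - 1) := by
  cases n <;> simp [colErase_cons]

lemma colErase_block {m q : ℕ} (hm : m ≠ 0) (hq : q ≠ 0) (k : ℕ) (β : List ℕ) :
    colErase (block (m + 1) (q + 1) k β) = block m q k (colErase β) := by
  simp [block, colErase, hm, hq]

lemma sum_colErase_le (l : List ℕ) : (colErase l).sum ≤ l.sum := by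
  induction l with
  | nil => simp
  | cons x l ih =>
    simp only [colErase_cons, List.sum_append, sum_oneRow, List.sum_cons]
    omega

lemma sum_colErase_cons_lt {x : ℕ} (hx : 0 < x) (l : List ℕ) :
    (colErase (x :: l)).sum < (x :: l).sum := by
  have := sum_colErase_le l
  simp only [colErase_cons, List.sum_append, sum_oneRow, List.sum_cons]
  omega

lemma forall_mem_colErase_lt {l : List ℕ} {n : ℕ} (h : ∀ x ∈ l, x < n + 1) :
    ∀ x ∈ colErase l, x < n := by
  intro x hx
  obtain ⟨⟨y, hy, rfl⟩, hx0⟩ := by simpa [colErase] using hx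
  have := h y hy
  omega

lemma isPartition_nil : IsPartition [] := ⟨List.Pairwise.nil, by simp⟩

lemma isPartition_cons_iff {x : ℕ} {l : List ℕ} :
    IsPartition (x :: l) ↔ 0 < x ∧ (∀ y ∈ l, y ≤ x) ∧ IsPartition l := by
  simp only [IsPartition, List.pairwise_cons, List.mem_cons, forall_eq_or_imp, ge_iff_le]
  tauto

lemma _root_.IsPartition.sublist {l₁ l₂ : List ℕ} (h : l₁.Sublist l₂)
    (hl : IsPartition l₂) : IsPartition l₁ :=
  ⟨hl.1.sublist h, fun x hx => hl.2 x (h.subset hx)⟩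

lemma _root_.IsPartition.colErase {l : List ℕ} (hl : IsPartition l) :
    IsPartition (colErase l) :=
  ⟨(List.pairwise_map.2 (hl.1.imp fun h => Nat.sub_le_sub_right h 1)).sublist
      List.filter_sublist,
    fun x hx => Nat.pos_of_ne_zero (by simpa using (List.of_mem_filter hx))⟩

lemma isPartition_singleton {n : ℕ} (hn : 0 < n) : IsPartition [n] :=
  isPartition_cons_iff.2 ⟨hn, by simp, isPartition_nil⟩

lemma isPartition_oneRow (n : ℕ) : IsPartition (oneRow n) := by
  rcases n with _ | n
  · exact isPartition_nil
  · exact isPartition_singleton n.succ_pos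

lemma isPartition_oneRow_append {n : ℕ} {l : List ℕ} (hl : IsPartition l)
    (hln : ∀ x ∈ l, x ≤ n) : IsPartition (oneRow n ++ l) := by
  rcases n with _ | n
  · simpa
  · exact isPartition_cons_iff.2 ⟨n.succ_pos, hln, hl⟩

lemma isPartition_block {m q : ℕ} (k : ℕ) {β : List ℕ} (hq : 1 ≤ q) (hqm : q ≤ m)
    (hβ : IsPartition β) (hβq : ∀ x ∈ β, x ≤ q) : IsPartition (block m q k β) := by
  have hrep : IsPartition (List.replicate k q ++ β) ∧
      ∀ x ∈ List.replicate k q ++ β, x ≤ q := by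
    induction k with
    | zero => exact ⟨hβ, hβq⟩
    | succ k ih =>
      rw [List.replicate_succ, List.cons_append]
      exact ⟨isPartition_cons_iff.2 ⟨hq, ih.2, ih.1⟩, by simpa using ih.2⟩
  exact isPartition_cons_iff.2 ⟨by omega, fun y hy => (hrep.2 y hy).trans hqm, hrep.1⟩

/-- The inequality of the theorem for `(m, q^(k+1), α)`, indexed so that no `k - 1` occurs. -/
def MainIneq (a : List ℕ → ℤ) (m q k : ℕ) (α : List ℕ) : Prop :=
  ((m : ℤ) - q + 1) * a (block m q (k + 1) α) ≤
    (k + 1) * a (block (m + 1) q k (oneRow (q - 1) ++ α))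

/-- What remains of `MainIneq a m q k []` after expanding both sides at their last part. -/
def CompanionIneq (a : List ℕ → ℤ) (m q k : ℕ) : Prop :=
  ((m : ℤ) - q + 1) * a (block m q k []) + (k + 1) * a (block m (q - 1) k (oneRow (q - 2))) ≤
    (k + 1) * a (block (m + 1) q k [])

section Recursion

variable {a : List ℕ → ℤ} (h0 : a [] = 1)
  (hrec : ∀ l : List ℕ, IsPartition l → l ≠ [] →
    a l = a l.dropLast + (l.getLastD 0 : ℤ) * a (colErase l))

include hrec in
lemma a_concat {l : List ℕ} {t : ℕ} (hl : IsPartition (l ++ [t])) :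
    a (l ++ [t]) = a l + t * a (colErase (l ++ [t])) := by
  simpa using hrec _ hl (by simp)

include h0 hrec in
lemma one_le_a (l : List ℕ) (hl : IsPartition l) : 1 ≤ a l := by
  rcases l.eq_nil_or_concat' with rfl | ⟨L, t, rfl⟩
  · exact h0.ge
  have ht : 0 < t := hl.2 t (by simp)
  have hdropLast : L.sum < (L ++ [t]).sum := by simpa using ht
  have hcolErase : (colErase (L ++ [t])).sum < (L ++ [t]).sum := by
    obtain ⟨x, l', hx⟩ := List.exists_cons_of_ne_nil (List.concat_ne_nil t L)
    rw [hx] at hl ⊢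
    exact sum_colErase_cons_lt (hl.2 x (by simp)) l'
  have hL := one_le_a L (hl.sublist (List.sublist_append_left L [t]))
  have hE := one_le_a _ hl.colErase
  rw [a_concat hrec hl]
  nlinarith [(by exact_mod_cast ht : (1 : ℤ) ≤ t)]
termination_by l.sum
decreasing_by all_goals (subst_vars; assumption)

include h0 hrec in
lemma a_le_a_concat {l : List ℕ} {t : ℕ} (hl : IsPartition (l ++ [t])) :
    a l ≤ a (l ++ [t]) := by
  have := one_le_a h0 hrec _ hl.colErase
  rw [a_concat hrec hl]
  nlinarith [Nat.cast_nonneg (α := ℤ) t]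

include h0 hrec in
lemma a_oneRow_succ (n : ℕ) : a (oneRow (n + 1)) = 1 + (n + 1) * a (oneRow n) := by
  have h := a_concat hrec (l := []) (t := n + 1) (by simpa using isPartition_oneRow (n + 1))
  simpa [← oneRow_succ, colErase_oneRow, h0] using h

include h0 hrec in
lemma a_oneRow_append_oneRow_le {s t : ℕ} (hts : t ≤ s) :
    a (oneRow s ++ oneRow t) ≤ (t + 1) * a (oneRow s) := by
  induction t generalizing s with
  | zero => simp
  | succ t ih =>
    obtain ⟨s, rfl⟩ : ∃ s', s = s' + 1 := ⟨s - 1, by omega⟩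
    have hp : IsPartition ([s + 1] ++ [t + 1]) :=
      isPartition_oneRow_append (n := s + 1) (isPartition_oneRow (t + 1)) (by simpa using hts)
    have hrow := a_oneRow_succ h0 hrec s
    have hih := ih (s := s) (by omega)
    have hpos := one_le_a h0 hrec _ (isPartition_oneRow s)
    simp only [oneRow_succ]
    rw [a_concat hrec hp, show [s + 1] ++ [t + 1] = oneRow (s + 1) ++ oneRow (t + 1) from rfl,
      colErase_append, colErase_oneRow, colErase_oneRow, ← oneRow_succ, hrow]
    simp only [Nat.add_sub_cancel] at hih ⊢
    have hts' : (t : ℤ) + 1 ≤ s + 1 := by exact_mod_cast hts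
    push_cast
    nlinarith [mul_le_mul_of_nonneg_right hts' (by linarith : (0 : ℤ) ≤ a (oneRow s))]

include hrec in
lemma a_block_concat {m q t : ℕ} (k : ℕ) {β : List ℕ} (hq : 1 ≤ q) (hqm : q ≤ m)
    (hβ : IsPartition (β ++ [t])) (hβq : ∀ x ∈ β ++ [t], x ≤ q + 1) :
    a (block (m + 1) (q + 1) k (β ++ [t])) =
      a (block (m + 1) (q + 1) k β) + t * a (block m q k (colErase (β ++ [t]))) := by
  have hp := isPartition_block k (by omega) (by omega : q + 1 ≤ m + 1) hβ hβq
  rw [← block_append] at hp ⊢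
  rw [a_concat hrec hp, block_append, colErase_block (by omega) (by omega)]

include hrec in
lemma a_block_succ {m q : ℕ} (k : ℕ) (hq : 1 ≤ q) (hqm : q ≤ m) :
    a (block (m + 1) (q + 1) (k + 1) []) =
      a (block (m + 1) (q + 1) k []) + (q + 1) * a (block m q (k + 1) []) := by
  have h := a_block_concat hrec k (β := []) (t := q + 1) hq hqm
    (by simpa using isPartition_singleton q.succ_pos) (by simp)
  rw [List.nil_append, colErase_cons, colErase_nil, List.append_nil, Nat.add_sub_cancel,
    oneRow_of_ne_zero (by omega), ← block_succ, ← block_succ] at h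
  exact_mod_cast h

include hrec in
lemma a_block_one (m k : ℕ) :
    a (block (m + 1) 1 k []) = a (oneRow (m + 1)) + k * a (oneRow m) := by
  induction k with
  | zero => simp
  | succ k ih =>
    have hp := isPartition_block (k + 1) le_rfl (by omega : 1 ≤ m + 1) isPartition_nil (by simp)
    have hce : colErase (block (m + 1) 1 (k + 1) []) = oneRow m := by
      rw [block, colErase_cons, Nat.add_sub_cancel]
      simp [colErase]
    rw [block_succ, ← List.nil_append [1], ← block_append] at hp ⊢
    rw [a_concat hrec hp, block_append, List.nil_append, ← block_succ, hce, ih]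
    push_cast
    ring

include h0 hrec in
lemma mainIneq_one (m k : ℕ) : MainIneq a (m + 1) 1 k [] := by
  have hpos := one_le_a h0 hrec _ (isPartition_oneRow m)
  simp only [MainIneq, Nat.sub_self, oneRow_zero, List.append_nil]
  rw [a_block_one hrec, a_block_one hrec, a_oneRow_succ h0 hrec (m + 1),
    a_oneRow_succ h0 hrec m]
  have hk : (0 : ℤ) ≤ k := k.cast_nonneg
  have hm : (0 : ℤ) ≤ m := m.cast_nonneg
  push_cast
  nlinarith [mul_nonneg (mul_nonneg hk (by positivity : (0 : ℤ) ≤ (m + 1) * (m + k + 2)))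
    (by linarith : (0 : ℤ) ≤ a (oneRow m)), mul_nonneg hk hm]

include hrec in
lemma mainIneq_nil {m q k : ℕ} (hq : 1 ≤ q) (hqm : q ≤ m)
    (hC : CompanionIneq a (m + 1) (q + 1) k) (hM : MainIneq a m q k []) :
    MainIneq a (m + 1) (q + 1) k [] := by
  have hμ := a_block_concat hrec k (m := m + 1) (β := []) (t := q) hq (by omega)
    (by simpa using isPartition_singleton hq) (by simp)
  rw [List.nil_append, colErase_cons, colErase_nil, List.append_nil] at hμ
  simp only [MainIneq, CompanionIneq, Nat.add_sub_cancel, List.append_nil,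
    show q + 1 - 2 = q - 1 by omega] at hC hM ⊢
  rw [oneRow_of_ne_zero (by omega), hμ, a_block_succ hrec k hq hqm]
  push_cast at hC hM ⊢
  linear_combination hC + (q + 1 : ℤ) * hM

include hrec in
lemma mainIneq_concat {m q k t : ℕ} {α : List ℕ} (hq : 1 ≤ q) (hqm : q ≤ m)
    (hα : IsPartition (α ++ [t])) (hαq : ∀ x ∈ α ++ [t], x ≤ q)
    (h₁ : MainIneq a (m + 1) (q + 1) k α) (h₂ : MainIneq a m q k (colErase (α ++ [t]))) :
    MainIneq a (m + 1) (q + 1) k (α ++ [t]) := by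
  have hlhs := a_block_concat hrec (k + 1) hq hqm hα fun x hx => (hαq x hx).trans q.le_succ
  have hrhs := a_block_concat hrec k (m := m + 1) (β := oneRow q ++ α) hq (by omega)
    (by simpa using isPartition_oneRow_append hα hαq) fun x hx => by
      rcases List.mem_append.1 (List.append_assoc _ α [t] ▸ hx) with hx | hx
      · have := (mem_oneRow hx).1; omega
      · exact (hαq x hx).trans q.le_succ
  rw [List.append_assoc, colErase_append, colErase_oneRow] at hrhs
  simp only [MainIneq, Nat.add_sub_cancel] at h₁ h₂ ⊢
  rw [hlhs, hrhs]
  push_cast at h₁ h₂ ⊢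
  linear_combination h₁ + (t : ℤ) * h₂

include h0 hrec in
lemma companionIneq_zero {m q : ℕ} (hq : 2 ≤ q) (hqm : q ≤ m) : CompanionIneq a m q 0 := by
  obtain ⟨m, rfl⟩ : ∃ m', m = m' + 1 := ⟨m - 1, by omega⟩
  have htwo := a_oneRow_append_oneRow_le h0 hrec (s := m + 1) (t := q - 2) (by omega)
  have hrow := a_oneRow_succ h0 hrec (m + 1)
  have hpos := one_le_a h0 hrec _ (isPartition_oneRow (m + 1))
  simp only [CompanionIneq, block_zero, oneRow_succ, List.singleton_append] at htwo hrow hpos ⊢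
  rw [hrow]
  push_cast [Nat.cast_sub hq] at htwo ⊢
  nlinarith

include h0 hrec in
lemma companionIneq_two_succ {m k : ℕ} (hm : 1 ≤ m) (hC : CompanionIneq a (m + 1) 2 k)
    (hM : MainIneq a m 1 k []) : CompanionIneq a (m + 1) 2 (k + 1) := by
  have hA : a (block (m + 1) 2 (k + 1) []) =
      a (block (m + 1) 2 k []) + (1 + 1) * a (block m 1 (k + 1) []) :=
    a_block_succ hrec k le_rfl hm
  have hB : a (block (m + 2) 2 (k + 1) []) =
      a (block (m + 2) 2 k []) + (1 + 1) * a (block (m + 1) 1 (k + 1) []) :=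
    a_block_succ hrec k le_rfl (by omega)
  have hmono : a (block (m + 1) 1 k []) ≤ a (block (m + 1) 1 (k + 1) []) := by
    have hp := isPartition_block (k + 1) le_rfl (by omega : 1 ≤ m + 1) isPartition_nil (by simp)
    rw [block_succ, ← List.nil_append [1], ← block_append] at hp ⊢
    exact a_le_a_concat h0 hrec hp
  have hQ := one_le_a h0 hrec _ (isPartition_block k (by omega) (by omega : 2 ≤ m + 2)
    isPartition_nil (by simp))
  have hZ := one_le_a h0 hrec _ (isPartition_block (k + 1) le_rfl (by omega : 1 ≤ m + 1)
    isPartition_nil (by simp))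
  have hk : (0 : ℤ) ≤ k + 1 := by positivity
  simp only [CompanionIneq, MainIneq, Nat.sub_self, oneRow_zero, List.append_nil,
    Nat.reduceSub] at hC hM ⊢
  rw [hA, hB]
  push_cast at hC hM ⊢
  linarith [mul_le_mul_of_nonneg_left hmono hk]

include h0 hrec in
lemma companionIneq_succ {m q k : ℕ} (hq : 2 ≤ q) (hqm : q ≤ m)
    (hC₁ : CompanionIneq a m q (k + 1)) (hC₂ : CompanionIneq a (m + 1) (q + 1) k)
    (hM : MainIneq a m q k []) : CompanionIneq a (m + 1) (q + 1) (k + 1) := by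
  have hA := a_block_succ hrec k (by omega : 1 ≤ q) hqm
  have hB := a_block_succ hrec k (by omega : 1 ≤ q) (by omega : q ≤ m + 1)
  obtain ⟨p, rfl⟩ : ∃ p, q = p + 1 := ⟨q - 1, by omega⟩
  have hC := a_block_concat hrec (k + 1) (m := m) (q := p) (β := []) (t := p) (by omega)
    (by omega) (by simpa using isPartition_singleton (by omega : 0 < p)) (by simp)
  rw [List.nil_append, colErase_cons, colErase_nil, List.append_nil] at hC
  have hX := one_le_a h0 hrec _ (isPartition_block (k + 1) (m := m) (q := p) (by omega)
    (by omega) (isPartition_oneRow (p - 1)) fun x hx => by have := (mem_oneRow hx).1; omega)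
  have hQ := one_le_a h0 hrec _ (isPartition_block k (m := m + 2) (q := p + 2) (by omega)
    (by omega) isPartition_nil (by simp))
  simp only [CompanionIneq, MainIneq, Nat.add_sub_cancel, List.append_nil,
    show p + 1 + 1 - 2 = p by omega, show p + 1 - 2 = p - 1 by omega] at hC₁ hC₂ hM ⊢
  rw [oneRow_of_ne_zero (by omega), hA, hB, hC]
  push_cast at hC₁ hC₂ hM ⊢
  linarith [mul_le_mul_of_nonneg_left hC₁ (by positivity : (0 : ℤ) ≤ p + 1),
    mul_nonneg (by positivity : (0 : ℤ) ≤ k + 1 + 1) (zero_le_one.trans hX)]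

section Induction

include h0 hrec

mutual

theorem mainIneq_of_isPartition (m q k : ℕ) (α : List ℕ) (hq : 1 ≤ q) (hqm : q ≤ m)
    (hα : IsPartition α) (hαq : ∀ x ∈ α, x < q) : MainIneq a m q k α := by
  obtain ⟨m, rfl⟩ : ∃ m', m = m' + 1 := ⟨m - 1, by omega⟩
  rcases α.eq_nil_or_concat' with rfl | ⟨α, t, rfl⟩
  · obtain rfl | hq₂ := hq.eq_or_lt
    · exact mainIneq_one h0 hrec m k
    obtain ⟨q, rfl⟩ : ∃ q', q = q' + 1 := ⟨q - 1, by omega⟩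
    exact mainIneq_nil hrec (by omega) (by omega)
      (companionIneq_of_le (m + 1) (q + 1) k (by omega) hqm)
      (mainIneq_of_isPartition m q k [] (by omega) (by omega) isPartition_nil (by simp))
  · have ht : 0 < t := hα.2 t (by simp)
    have htq : t < q := hαq t (by simp)
    obtain ⟨q, rfl⟩ : ∃ q', q = q' + 1 := ⟨q - 1, by omega⟩
    have hsum := sum_colErase_le (α ++ [t])
    exact mainIneq_concat hrec (by omega) (by omega) hα (fun x hx => by have := hαq x hx; omega)
      (mainIneq_of_isPartition (m + 1) (q + 1) k α hq hqm
        (hα.sublist (List.sublist_append_left α [t])) fun x hx => hαq x (by simp [hx]))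
      (mainIneq_of_isPartition m q k _ (by omega) (by omega) hα.colErase
        (forall_mem_colErase_lt hαq))
termination_by m + q * (k + 1) + α.sum
decreasing_by
  all_goals
    subst_vars
    simp only [List.sum_append, List.sum_cons, List.sum_nil] at *
    nlinarith

theorem companionIneq_of_le (m q k : ℕ) (hq : 2 ≤ q) (hqm : q ≤ m) :
    CompanionIneq a m q k := by
  rcases k.eq_zero_or_pos with rfl | hk
  · exact companionIneq_zero h0 hrec hq hqm
  obtain ⟨k, rfl⟩ : ∃ k', k = k' + 1 := ⟨k - 1, by omega⟩
  obtain ⟨m, rfl⟩ : ∃ m', m = m' + 1 := ⟨m - 1, by omega⟩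
  obtain rfl | hq₃ := hq.eq_or_lt
  · exact companionIneq_two_succ h0 hrec (by omega)
      (companionIneq_of_le (m + 1) 2 k le_rfl hqm)
      (mainIneq_of_isPartition m 1 k [] le_rfl (by omega) isPartition_nil (by simp))
  obtain ⟨q, rfl⟩ : ∃ q', q = q' + 1 := ⟨q - 1, by omega⟩
  exact companionIneq_succ h0 hrec (by omega) (by omega)
    (companionIneq_of_le m q (k + 1) (by omega) (by omega))
    (companionIneq_of_le (m + 1) (q + 1) k hq hqm)
    (mainIneq_of_isPartition m q k [] (by omega) (by omega) isPartition_nil (by simp))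
termination_by m + 1 + q * k
decreasing_by all_goals (subst_vars; nlinarith [List.sum_nil (α := ℕ)])

end

end Induction

end Recursion

end DerangementEigenvalue

theorem stmt_18 (a : List ℕ → ℤ) (h0 : a [] = 1)
    (hrec : ∀ l : List ℕ, IsPartition l → l ≠ [] →
      a l = a l.dropLast + (l.getLastD 0 : ℤ) * a (colErase l))
    (m q k : ℕ) (α : List ℕ) (hq : 1 ≤ q) (hmq : q ≤ m) (hk : 1 ≤ k)
    (hα : α.Pairwise (· ≥ ·)) (hαpos : ∀ x ∈ α, 0 < x) (hαq : ∀ x ∈ α, x < q) :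
    ((m : ℤ) - q + 1) * a (m :: (List.replicate k q ++ α)) ≤
      k * a ((m + 1) ::
        (List.replicate (k - 1) q ++ (if q = 1 then [] else [q - 1]) ++ α)) := by
  open DerangementEigenvalue in
  obtain ⟨k, rfl⟩ : ∃ k', k = k' + 1 := ⟨k - 1, by omega⟩
  have hrow : oneRow (q - 1) = if q = 1 then [] else [q - 1] := by
    simp only [oneRow, show q - 1 = 0 ↔ q = 1 by omega]
  have h := mainIneq_of_isPartition h0 hrec m q k α hq hmq ⟨hα, hαpos⟩ hαq
  rw [MainIneq, block, block, hrow] at h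
  simpa [List.append_assoc] using h
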